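/- arXiv:2310.02844 — 10 statements merged into one kernel-verified Lean document; each statement's English description precedes it below -/
import Mathlib

section
/- Let κ ⊆ σ be integral cones in a lattice L. The map τ ↦ τ − κ is an inclusion-preserving bijection from the set of faces of σ containing κ onto the set of faces of σ − κ, with inverse ν ↦ ν ∩ σ. In particular: for every face τ of σ with κ ⊆ τ, the set τ − κ is a face of σ − κ and (τ − κ) ∩ σ = τ; and for every face ν of σ − κ, the set ν ∩ σ is a face of σ containing κ and (ν ∩ σ) − κ = ν. -/
open Pointwise

/-- An integral cone in `L`: a subset containing `0` and closed under addition. -/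
def IsCone {L : Type*} [AddCommMonoid L] (σ : Set L) : Prop :=
  0 ∈ σ ∧ ∀ a ∈ σ, ∀ b ∈ σ, a + b ∈ σ

/-- A face of a cone `σ`: a nonempty subset `τ ⊆ σ` such that for `a, b ∈ σ`,
`a + b ∈ τ` if and only if `a ∈ τ` and `b ∈ τ`. -/
def IsFace {L : Type*} [AddCommMonoid L] (σ τ : Set L) : Prop :=
  τ.Nonempty ∧ τ ⊆ σ ∧ ∀ a ∈ σ, ∀ b ∈ σ, (a + b ∈ τ ↔ a ∈ τ ∧ b ∈ τ)

/-- localisation at a subcone `κ ⊆ σ` induces an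
inclusion-preserving bijection `τ ↦ τ − κ` from faces of `σ` containing `κ`
onto faces of `σ − κ`, with inverse `ν ↦ ν ∩ σ`. -/
theorem stmt3
    {L : Type*} [AddCommGroup L] [Module.Free ℤ L] [Module.Finite ℤ L]
    (σ κ : Set L) (hσ : IsCone σ) (hκ : IsCone κ) (hκσ : κ ⊆ σ) :
    -- inclusion-preserving
    (∀ τ τ' : Set L, IsFace σ τ → IsFace σ τ' → κ ⊆ τ → κ ⊆ τ' → τ ⊆ τ' →
      τ - κ ⊆ τ' - κ) ∧
    -- well defined, with `ν ∩ σ` a left inverse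
    (∀ τ : Set L, IsFace σ τ → κ ⊆ τ →
      IsFace (σ - κ) (τ - κ) ∧ (τ - κ) ∩ σ = τ) ∧
    -- surjective, with `ν ∩ σ` a right inverse
    (∀ ν : Set L, IsFace (σ - κ) ν →
      IsFace σ (ν ∩ σ) ∧ κ ⊆ ν ∩ σ ∧ (ν ∩ σ) - κ = ν) := by
  obtain ⟨hσ0, hσadd⟩ := hσ
  obtain ⟨hκ0, hκadd⟩ := hκ
  refine ⟨?_, ?_, ?_⟩
  · rintro τ τ' _ _ _ _ hττ' x ⟨t, ht, k, hk, rfl⟩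
    exact ⟨t, hττ' ht, k, hk, rfl⟩
  · rintro τ ⟨⟨t0, ht0⟩, hτσ, hτf⟩ hκτ
    -- τ is closed under addition
    have hτadd : ∀ a ∈ τ, ∀ b ∈ τ, a + b ∈ τ := fun a ha b hb =>
      (hτf a (hτσ ha) b (hτσ hb)).mpr ⟨ha, hb⟩
    constructor
    · refine ⟨⟨t0 - 0, t0, ht0, 0, hκ0, rfl⟩, ?_, ?_⟩
      · rintro x ⟨t, ht, k, hk, rfl⟩
        exact ⟨t, hτσ ht, k, hk, rfl⟩
      · rintro a ⟨s1, hs1, k1, hk1, rfl⟩ b ⟨s2, hs2, k2, hk2, rfl⟩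
        constructor
        · rintro ⟨t, ht, k, hk, hEq⟩
          simp only [] at hEq
          have key : s1 + s2 + k = t + k1 + k2 := by
            rw [eq_add_of_sub_eq hEq]; abel
          have hmem : s1 + s2 + k ∈ τ := by
            rw [key]
            exact hτadd _ (hτadd _ ht _ (hκτ hk1)) _ (hκτ hk2)
          have h1 : s1 + s2 ∈ τ ∧ k ∈ τ :=
            (hτf _ (hσadd _ hs1 _ hs2) _ (hκσ hk)).mp hmem
          have h2 : s1 ∈ τ ∧ s2 ∈ τ := (hτf _ hs1 _ hs2).mp h1.1
          exact ⟨⟨s1, h2.1, k1, hk1, rfl⟩, ⟨s2, h2.2, k2, hk2, rfl⟩⟩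
        · rintro ⟨⟨t1, ht1, l1, hl1, hEq1⟩, ⟨t2, ht2, l2, hl2, hEq2⟩⟩
          refine ⟨t1 + t2, hτadd _ ht1 _ ht2, l1 + l2, hκadd _ hl1 _ hl2, ?_⟩
          simp only [] at hEq1 hEq2
          show t1 + t2 - (l1 + l2) = s1 - k1 + (s2 - k2)
          rw [← hEq1, ← hEq2]; abel
    · ext x
      constructor
      · rintro ⟨⟨t, ht, k, hk, rfl⟩, hxσ⟩
        have : t - k + k ∈ τ := by
          rw [sub_add_cancel]; exact ht
        exact ((hτf _ hxσ _ (hκσ hk)).mp this).1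
      · intro hx
        exact ⟨⟨x, hx, 0, hκ0, by simp⟩, hτσ hx⟩
  · rintro ν ⟨⟨v0, hv0⟩, hνσκ, hνf⟩
    have hσsub : ∀ x ∈ σ, x ∈ σ - κ := fun x hx => ⟨x, hx, 0, hκ0, by simp⟩
    -- 0 ∈ ν
    have h0ν : (0 : L) ∈ ν := by
      have hv0' := hνσκ hv0
      have : v0 + 0 ∈ ν := by simpa using hv0
      exact ((hνf _ hv0' _ (hσsub 0 hσ0)).mp this).2
    -- κ ⊆ ν and -κ ⊆ ν
    have hκν : ∀ k ∈ κ, k ∈ ν ∧ -k ∈ ν := by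
      intro k hk
      have hkm : k ∈ σ - κ := hσsub k (hκσ hk)
      have hmk : -k ∈ σ - κ := ⟨0, hσ0, k, hk, by simp⟩
      have : k + -k ∈ ν := by simpa using h0ν
      exact (hνf _ hkm _ hmk).mp this
    -- ν closed under adding elements of κ
    have hνaddκ : ∀ v ∈ ν, ∀ k ∈ κ, v + k ∈ ν := by
      intro v hv k hk
      have hvm := hνσκ hv
      have hkm : k ∈ σ - κ := hσsub k (hκσ hk)
      exact (hνf _ hvm _ hkm).mpr ⟨hv, (hκν k hk).1⟩
    have hface : IsFace σ (ν ∩ σ) := by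
      refine ⟨?_, Set.inter_subset_right, ?_⟩
      · obtain ⟨s, hs, k, hk, hEq⟩ := hνσκ hv0
        refine ⟨s, ?_, hs⟩
        have : v0 + k ∈ ν := hνaddκ v0 hv0 k hk
        rwa [← hEq, sub_add_cancel] at this
      · intro a ha b hb
        have := hνf a (hσsub a ha) b (hσsub b hb)
        constructor
        · intro h
          have := this.mp h.1
          exact ⟨⟨this.1, ha⟩, ⟨this.2, hb⟩⟩
        · rintro ⟨⟨ha', _⟩, ⟨hb', _⟩⟩
          exact ⟨this.mpr ⟨ha', hb'⟩, hσadd _ ha _ hb⟩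
    refine ⟨hface, fun k hk => ⟨(hκν k hk).1, hκσ hk⟩, ?_⟩
    ext x
    constructor
    · rintro ⟨t, ⟨htν, htσ⟩, k, hk, rfl⟩
      have htk : t - k ∈ σ - κ := ⟨t, htσ, k, hk, rfl⟩
      have hkm : k ∈ σ - κ := hσsub k (hκσ hk)
      have : t - k + k ∈ ν := by rw [sub_add_cancel]; exact htν
      exact ((hνf _ htk _ hkm).mp this).1
    · intro hx
      obtain ⟨s, hs, k, hk, hEq⟩ := hνσκ hx
      have hsν : s ∈ ν := by
        have : x + k ∈ ν := hνaddκ x hx k hk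
        rwa [← hEq, sub_add_cancel] at this
      exact ⟨s, ⟨hsν, hs⟩, k, hk, hEq⟩
end

section
/- The coface relation on the set of integral cones in a lattice L, defined by σ′ ⪯ σ if and only if σ′ = σ − κ for some subcone κ ⊆ σ, is a partial order: it is reflexive, antisymmetric, and transitive. In particular, for transitivity: if σ′ = (σ − κ) − ν for subcones κ ⊆ σ and ν ⊆ σ − κ, then σ′ = σ − (σ ∩ (−σ′)). -/
open Pointwise

/-- `σ'` is a coface of `σ`: the localisation `σ − κ` of `σ` at a subcone
`κ ⊆ σ`. -/
def IsCoface {L : Type*} [AddCommGroup L] (σ' σ : Set L) : Prop :=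
  ∃ κ : Set L, IsCone κ ∧ κ ⊆ σ ∧ σ' = σ - κ

/-! Localising only enlarges a cone (`σ ⊆ σ - κ` as `0 ∈ κ`), which gives antisymmetry.
For transitivity, an element `a - k - (b - k')` of `(σ - κ) - ν` equals `(a + k') - (k + b)`,
where `k + b ∈ σ` and `-(k + b) = -k + -(b - k') + -k'` lies in the cone `σ' = (σ - κ) - ν`;
so `σ'` is the localisation of `σ` at the subcone `σ ∩ -σ'`. -/

section

variable {L : Type*} [AddCommGroup L] {σ κ ν σ' σ'' : Set L}

theorem isCone_zero : IsCone ({0} : Set L) :=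
  ⟨rfl, by simp⟩

theorem IsCone.inter (hσ : IsCone σ) (hκ : IsCone κ) : IsCone (σ ∩ κ) :=
  ⟨⟨hσ.1, hκ.1⟩, fun a ha b hb => ⟨hσ.2 a ha.1 b hb.1, hκ.2 a ha.2 b hb.2⟩⟩

theorem IsCone.neg (hσ : IsCone σ) : IsCone (-σ) := by
  refine ⟨by simpa using hσ.1, fun a ha b hb => ?_⟩
  rw [Set.mem_neg, neg_add]
  exact hσ.2 _ ha _ hb

theorem IsCone.sub (hσ : IsCone σ) (hκ : IsCone κ) : IsCone (σ - κ) := by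
  refine ⟨⟨0, hσ.1, 0, hκ.1, sub_zero 0⟩, ?_⟩
  rintro _ ⟨a, ha, b, hb, rfl⟩ _ ⟨c, hc, d, hd, rfl⟩
  exact ⟨a + c, hσ.2 a ha c hc, b + d, hκ.2 b hb d hd, add_sub_add_comm a c b d⟩

theorem IsCone.sub_inter_neg_subset (hσ' : IsCone σ') (hσσ' : σ ⊆ σ') :
    σ - (σ ∩ -σ') ⊆ σ' := by
  rintro _ ⟨a, ha, m, ⟨-, hm⟩, rfl⟩
  simpa [sub_eq_add_neg] using hσ'.2 a (hσσ' ha) (-m) hm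

theorem sub_sub_subset_sub_inter_neg (hσ : IsCone σ) (hκ : IsCone κ) (hκσ : κ ⊆ σ)
    (hν : IsCone ν) (hνσκ : ν ⊆ σ - κ) :
    (σ - κ) - ν ⊆ σ - (σ ∩ -((σ - κ) - ν)) := by
  have hσ' : IsCone ((σ - κ) - ν) := (hσ.sub hκ).sub hν
  have hnegκ : -κ ⊆ (σ - κ) - ν :=
    (Set.neg_subset_sub_right hσ.1).trans (Set.subset_sub_left hν.1)
  have hnegν : -ν ⊆ (σ - κ) - ν := Set.neg_subset_sub_right (hσ.sub hκ).1
  rintro _ ⟨_, ⟨a, ha, k, hk, rfl⟩, n, hn, rfl⟩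
  obtain ⟨b, hb, k', hk', rfl⟩ := Set.mem_sub.1 (hνσκ hn)
  refine ⟨a + k', hσ.2 a ha k' (hκσ hk'), k + b, ⟨hσ.2 k (hκσ hk) b hb, ?_⟩,
    by beta_reduce; abel⟩
  have := hσ'.2 _ (hnegκ (Set.neg_mem_neg.2 hk)) _
    (hσ'.2 _ (hnegν (Set.neg_mem_neg.2 hn)) _ (hnegκ (Set.neg_mem_neg.2 hk')))
  rw [Set.mem_neg]
  convert this using 1
  abel

theorem sub_sub_eq_sub_inter_neg (hσ : IsCone σ) (hκ : IsCone κ) (hκσ : κ ⊆ σ)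
    (hν : IsCone ν) (hνσκ : ν ⊆ σ - κ) :
    (σ - κ) - ν = σ - (σ ∩ -((σ - κ) - ν)) := by
  refine (sub_sub_subset_sub_inter_neg hσ hκ hκσ hν hνσκ).antisymm ?_
  exact ((hσ.sub hκ).sub hν).sub_inter_neg_subset
    ((Set.subset_sub_left hκ.1).trans (Set.subset_sub_left hν.1))

theorem IsCoface.refl (hσ : IsCone σ) : IsCoface σ σ :=
  ⟨{0}, isCone_zero, Set.singleton_subset_iff.2 hσ.1, (sub_zero σ).symm⟩

theorem IsCoface.antisymm (h₁ : IsCoface σ' σ) (h₂ : IsCoface σ σ') : σ = σ' := by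
  obtain ⟨κ, hκ, -, rfl⟩ := h₁
  obtain ⟨κ', hκ', -, h⟩ := h₂
  exact (Set.subset_sub_left hκ.1).antisymm ((Set.subset_sub_left hκ'.1).trans_eq h.symm)

theorem IsCoface.trans (hσ : IsCone σ) (h₁ : IsCoface σ' σ) (h₂ : IsCoface σ'' σ') :
    IsCoface σ'' σ := by
  obtain ⟨κ, hκ, hκσ, rfl⟩ := h₁
  obtain ⟨ν, hν, hνσκ, rfl⟩ := h₂
  exact ⟨σ ∩ -((σ - κ) - ν), hσ.inter ((hσ.sub hκ).sub hν).neg, Set.inter_subset_left,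
    sub_sub_eq_sub_inter_neg hσ hκ hκσ hν hνσκ⟩

end

theorem stmt4_general {L : Type*} [AddCommGroup L] :
    -- reflexivity
    (∀ σ : Set L, IsCone σ → IsCoface σ σ) ∧
    -- antisymmetry
    (∀ σ σ' : Set L, IsCone σ → IsCone σ' →
      IsCoface σ' σ → IsCoface σ σ' → σ = σ') ∧
    -- transitivity
    (∀ σ σ' σ'' : Set L, IsCone σ →
      IsCoface σ' σ → IsCoface σ'' σ' → IsCoface σ'' σ) ∧
    -- explicit formula for transitivity
    (∀ σ κ ν σ' : Set L, IsCone σ → IsCone κ → κ ⊆ σ → IsCone ν → ν ⊆ σ - κ →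
      σ' = (σ - κ) - ν → σ' = σ - (σ ∩ (-σ'))) := by
  refine ⟨fun σ hσ => .refl hσ, fun σ σ' _ _ h₁ h₂ => h₁.antisymm h₂,
    fun σ σ' σ'' hσ h₁ h₂ => h₁.trans hσ h₂, ?_⟩
  rintro σ κ ν σ' hσ hκ hκσ hν hνσκ rfl
  exact sub_sub_eq_sub_inter_neg hσ hκ hκσ hν hνσκ

/-- the coface relation is a partial order on the integral cones
in a lattice; for transitivity, `(σ − κ) − ν = σ − (σ ∩ (−σ'))`. -/
theorem stmt4 {L : Type*} [AddCommGroup L] [Module.Free ℤ L] [Module.Finite ℤ L] :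
    -- reflexivity
    (∀ σ : Set L, IsCone σ → IsCoface σ σ) ∧
    -- antisymmetry
    (∀ σ σ' : Set L, IsCone σ → IsCone σ' →
      IsCoface σ' σ → IsCoface σ σ' → σ = σ') ∧
    -- transitivity
    (∀ σ σ' σ'' : Set L, IsCone σ →
      IsCoface σ' σ → IsCoface σ'' σ' → IsCoface σ'' σ) ∧
    -- explicit formula for transitivity
    (∀ σ κ ν σ' : Set L, IsCone σ → IsCone κ → κ ⊆ σ → IsCone ν → ν ⊆ σ - κ →
      σ' = (σ - κ) - ν → σ' = σ - (σ ∩ (-σ'))) :=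
  stmt4_general
end

section
/- Let τ be a face of an integral cone σ in a lattice L, and suppose that the subgroup of L generated by τ has the same rank as the subgroup of L generated by σ. Then τ = σ. Consequently, every strictly increasing chain of cones in L in which each cone is a proper face of the next has at most rank(L) + 1 elements. -/
open Pointwise

/-!
If the face `τ` has the same rank as `σ`, then `⟨σ⟩ / ⟨τ⟩` has rank zero, hence is torsion.
So every `x ∈ σ` has a multiple `n • x = a - b`, `n ≠ 0`, with `a, b ∈ τ`. Then `n • x + b = a ∈ τ`, and the face property, applied to this sum and to
`n • x = x + (n - 1) • x`, puts `x` in `τ`. Hence proper faces have strictly smaller rank,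
and ranks along a chain are distinct values in `{0, …, rank L}`.
-/

open Module

theorem Submodule.exists_smul_mem_of_le_of_finrank_eq {R M : Type*} [CommRing R] [IsDomain R]
    [AddCommGroup M] [Module R M] {A B : Submodule R M} [Module.Finite R B] (hAB : A ≤ B)
    (h : finrank R A = finrank R B) {x : M} (hx : x ∈ B) : ∃ a : R, a ≠ 0 ∧ a • x ∈ A := by
  set A' := A.comap B.subtype
  have hquot : finrank R (B ⧸ A') = 0 := by
    have := A'.finrank_quotient_add_finrank
    rw [(Submodule.comapSubtypeEquivOfLe hAB).finrank_eq, h] at this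
    omega
  have htors : IsTorsion R (B ⧸ A') := finrank_eq_zero_iff_isTorsion.mp hquot
  obtain ⟨⟨a, ha⟩, hax⟩ := @htors (Submodule.Quotient.mk ⟨x, hx⟩)
  refine ⟨a, nonZeroDivisors.ne_zero ha, ?_⟩
  rwa [Submonoid.mk_smul, ← Submodule.Quotient.mk_smul, Submodule.Quotient.mk_eq_zero] at hax

theorem AddSubgroup.exists_nsmul_mem_of_le_of_finrank_eq {M : Type*} [AddCommGroup M]
    {A B : AddSubgroup M} [Module.Finite ℤ B] (hAB : A ≤ B) (h : finrank ℤ A = finrank ℤ B)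
    {x : M} (hx : x ∈ B) : ∃ n : ℕ, n ≠ 0 ∧ n • x ∈ A := by
  have : Module.Finite ℤ B.toIntSubmodule := ‹_›
  obtain ⟨a, ha, hax⟩ :=
    Submodule.exists_smul_mem_of_le_of_finrank_eq (A := A.toIntSubmodule)
      (B := B.toIntSubmodule) hAB h hx
  refine ⟨a.natAbs, Int.natAbs_ne_zero.mpr ha, ?_⟩
  rcases Int.natAbs_eq a with hn | hn
  · rwa [← natCast_zsmul, ← hn]
  · rw [← natCast_zsmul, ← neg_neg (a.natAbs : ℤ), ← hn, neg_zsmul]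
    exact A.neg_mem hax

section Cone

variable {L : Type*} [AddCommMonoid L] {σ τ : Set L}

def IsCone.toAddSubmonoid (hσ : IsCone σ) : AddSubmonoid L where
  carrier := σ
  zero_mem' := hσ.1
  add_mem' ha hb := hσ.2 _ ha _ hb

theorem IsCone.nsmul_mem (hσ : IsCone σ) {x : L} (hx : x ∈ σ) (n : ℕ) : n • x ∈ σ :=
  hσ.toAddSubmonoid.nsmul_mem (x := x) hx n

namespace IsFace

theorem subset (hτ : IsFace σ τ) : τ ⊆ σ := hτ.2.1

theorem isCone (hσ : IsCone σ) (hτ : IsFace σ τ) : IsCone τ := by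
  obtain ⟨⟨t, ht⟩, hsub, hface⟩ := hτ
  refine ⟨((hface t (hsub ht) 0 hσ.1).mp (by rwa [add_zero])).2, fun a ha b hb => ?_⟩
  exact (hface a (hsub ha) b (hsub hb)).mpr ⟨ha, hb⟩

theorem mem_of_add_mem (hτ : IsFace σ τ) {a b : L} (ha : a ∈ σ) (hb : b ∈ σ) (hab : a + b ∈ τ) :
    a ∈ τ :=
  ((hτ.2.2 a ha b hb).mp hab).1

theorem mem_of_nsmul_mem (hσ : IsCone σ) (hτ : IsFace σ τ) {x : L} (hx : x ∈ σ) {n : ℕ}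
    (hn : n ≠ 0) (hnx : n • x ∈ τ) : x ∈ τ := by
  obtain ⟨m, rfl⟩ := Nat.exists_eq_succ_of_ne_zero hn
  rw [succ_nsmul, add_comm] at hnx
  exact hτ.mem_of_add_mem hx (hσ.nsmul_mem hx m) hnx

end IsFace

end Cone

section Lattice

variable {L : Type*} [AddCommGroup L] {σ τ : Set L}

theorem IsCone.exists_sub_eq_of_mem_closure (hσ : IsCone σ) {y : L}
    (hy : y ∈ AddSubgroup.closure σ) : ∃ a ∈ σ, ∃ b ∈ σ, a - b = y := by
  induction hy using AddSubgroup.closure_induction with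
  | mem z hz => exact ⟨z, hz, 0, hσ.1, sub_zero z⟩
  | zero => exact ⟨0, hσ.1, 0, hσ.1, sub_zero 0⟩
  | add _ _ _ _ ihy ihz =>
    obtain ⟨a, ha, b, hb, rfl⟩ := ihy
    obtain ⟨c, hc, d, hd, rfl⟩ := ihz
    exact ⟨a + c, hσ.2 a ha c hc, b + d, hσ.2 b hb d hd, add_sub_add_comm a c b d⟩
  | neg _ _ ih =>
    obtain ⟨a, ha, b, hb, rfl⟩ := ih
    exact ⟨b, hb, a, ha, (neg_sub a b).symm⟩

theorem IsFace.mem_of_nsmul_mem_closure (hσ : IsCone σ) (hτ : IsFace σ τ) {x : L} (hx : x ∈ σ)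
    {n : ℕ} (hn : n ≠ 0) (hnx : n • x ∈ AddSubgroup.closure τ) : x ∈ τ := by
  obtain ⟨a, ha, b, hb, hab⟩ := (hτ.isCone hσ).exists_sub_eq_of_mem_closure hnx
  have hsum : n • x + b ∈ τ := by rwa [← hab, sub_add_cancel]
  exact hτ.mem_of_nsmul_mem hσ hx hn (hτ.mem_of_add_mem (hσ.nsmul_mem hx n) (hτ.subset hb) hsum)

variable [Module.Finite ℤ L]

instance AddSubgroup.finite_int (H : AddSubgroup L) : Module.Finite ℤ H :=
  inferInstanceAs (Module.Finite ℤ H.toIntSubmodule)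

theorem IsFace.eq_of_finrank_closure_eq (hσ : IsCone σ) (hτ : IsFace σ τ)
    (h : finrank ℤ (AddSubgroup.closure τ) = finrank ℤ (AddSubgroup.closure σ)) : τ = σ := by
  refine hτ.subset.antisymm fun x hx => ?_
  obtain ⟨n, hn, hnx⟩ := AddSubgroup.exists_nsmul_mem_of_le_of_finrank_eq
    (AddSubgroup.closure_mono hτ.subset) h (AddSubgroup.subset_closure hx)
  exact hτ.mem_of_nsmul_mem_closure hσ hx hn hnx

theorem IsFace.finrank_closure_lt (hσ : IsCone σ) (hτ : IsFace σ τ) (hne : τ ≠ σ) :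
    finrank ℤ (AddSubgroup.closure τ) < finrank ℤ (AddSubgroup.closure σ) :=
  (Submodule.finrank_mono (AddSubgroup.toIntSubmodule.monotone
    (AddSubgroup.closure_mono hτ.subset))).lt_of_ne (mt (hτ.eq_of_finrank_closure_eq hσ) hne)

theorem chain_of_faces_length_le {n : ℕ} (c : Fin (n + 1) → Set L) (hc : ∀ i, IsCone (c i))
    (hface : ∀ i : Fin n, IsFace (c i.succ) (c i.castSucc) ∧ c i.castSucc ≠ c i.succ) :
    n + 1 ≤ finrank ℤ L + 1 := by
  let rank (i : Fin (n + 1)) : Fin (finrank ℤ L + 1) :=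
    ⟨finrank ℤ (AddSubgroup.closure (c i)),
      Nat.lt_succ_of_le (AddSubgroup.closure (c i)).toIntSubmodule.finrank_le⟩
  have hmono : StrictMono rank := Fin.strictMono_iff_lt_succ.mpr fun i =>
    (hface i).1.finrank_closure_lt (hc i.succ) (hface i).2
  simpa using Fintype.card_le_of_injective rank hmono.injective

end Lattice

theorem stmt6_general {L : Type*} [AddCommGroup L] [Module.Finite ℤ L] :
    (∀ σ τ : Set L, IsCone σ → IsFace σ τ →
      Module.finrank ℤ (AddSubgroup.closure τ) =
        Module.finrank ℤ (AddSubgroup.closure σ) →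
      τ = σ) ∧
    (∀ (n : ℕ) (c : Fin (n + 1) → Set L),
      (∀ i, IsCone (c i)) →
      (∀ i : Fin n, IsFace (c i.succ) (c i.castSucc) ∧ c i.castSucc ≠ c i.succ) →
      n + 1 ≤ Module.finrank ℤ L + 1) :=
  ⟨fun _ _ hσ hτ => hτ.eq_of_finrank_closure_eq hσ, fun _ => chain_of_faces_length_le⟩

/-- a face of the same rank as the cone equals the cone, and any
strictly increasing chain of proper faces has at most `rank L + 1` elements. -/
theorem stmt6 {L : Type*} [AddCommGroup L] [Module.Free ℤ L] [Module.Finite ℤ L] :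
    (∀ σ τ : Set L, IsCone σ → IsFace σ τ →
      Module.finrank ℤ (AddSubgroup.closure τ) =
        Module.finrank ℤ (AddSubgroup.closure σ) →
      τ = σ) ∧
    (∀ (n : ℕ) (c : Fin (n + 1) → Set L),
      (∀ i, IsCone (c i)) →
      (∀ i : Fin n, IsFace (c i.succ) (c i.castSucc) ∧ c i.castSucc ≠ c i.succ) →
      n + 1 ≤ Module.finrank ℤ L + 1) :=
  stmt6_general
end

section
/- Let σ be an integral cone in a lattice L and let τ, τ′ be faces of σ. Then the Minkowski sum (σ − τ) + (σ − τ′) equals σ − (τ + τ′) = σ − mf(τ + τ′), where mf(τ + τ′) is the minimal face of σ containing τ + τ′, and this sum is a coface of both σ − τ and σ − τ′. Consequently, the set of all cofaces of σ is a cofan in L. -/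
open Pointwise

/-- A cofan in `L`: a set of cones closed under cofaces such that the sum of
any two of its cones is a coface of the first. -/
def IsCofan {L : Type*} [AddCommGroup L] (C : Set (Set L)) : Prop :=
  (∀ σ ∈ C, IsCone σ) ∧
  (∀ σ ∈ C, ∀ τ : Set L, IsFace σ τ → σ - τ ∈ C) ∧
  (∀ σ ∈ C, ∀ σ' ∈ C, ∃ τ : Set L, IsFace σ τ ∧ σ + σ' = σ - τ)

section aux
variable {L : Type*} [AddCommGroup L]

lemma face_cone {σ τ : Set L} (hσ : IsCone σ) (hτ : IsFace σ τ) : IsCone τ := by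
  obtain ⟨⟨x, hx⟩, hsub, hface⟩ := hτ
  have h0 : (0:L) ∈ τ := ((hface x (hsub hx) 0 hσ.1).mp (by simpa using hx)).2
  exact ⟨h0, fun a ha b hb => (hface a (hsub ha) b (hsub hb)).mpr ⟨ha, hb⟩⟩

lemma add_cone {κ κ' : Set L} (hκ : IsCone κ) (hκ' : IsCone κ') : IsCone (κ + κ') := by
  constructor
  · exact Set.mem_add.mpr ⟨0, hκ.1, 0, hκ'.1, by simp⟩
  · intro a ha b hb
    obtain ⟨x, hx, y, hy, rfl⟩ := Set.mem_add.mp ha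
    obtain ⟨x', hx', y', hy', rfl⟩ := Set.mem_add.mp hb
    exact Set.mem_add.mpr ⟨x + x', hκ.2 x hx x' hx', y + y', hκ'.2 y hy y' hy', by abel⟩

lemma sub_cone {σ κ : Set L} (hσ : IsCone σ) (hκ : IsCone κ) : IsCone (σ - κ) := by
  constructor
  · exact Set.mem_sub.mpr ⟨0, hσ.1, 0, hκ.1, by simp⟩
  · intro a ha b hb
    obtain ⟨x, hx, y, hy, rfl⟩ := Set.mem_sub.mp ha
    obtain ⟨x', hx', y', hy', rfl⟩ := Set.mem_sub.mp hb
    exact Set.mem_sub.mpr ⟨x + x', hσ.2 x hx x' hx', y + y', hκ.2 y hy y' hy', by abel⟩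

lemma cone_add_self {σ : Set L} (hσ : IsCone σ) : σ + σ = σ := by
  apply Set.Subset.antisymm
  · intro x hx
    obtain ⟨a, ha, b, hb, rfl⟩ := Set.mem_add.mp hx
    exact hσ.2 a ha b hb
  · intro x hx
    exact Set.mem_add.mpr ⟨x, hx, 0, hσ.1, by simp⟩

/-- mf(α) is a face of σ. -/
lemma mf_isFace {σ α : Set L} (hσ : IsCone σ) (hα : IsCone α) (hαs : α ⊆ σ) :
    IsFace σ (σ ∩ (α - σ)) := by
  refine ⟨⟨0, hσ.1, Set.mem_sub.mpr ⟨0, hα.1, 0, hσ.1, by simp⟩⟩, Set.inter_subset_left, ?_⟩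
  intro a ha b hb
  constructor
  · rintro ⟨hab, habm⟩
    obtain ⟨x, hx, s, hs, hxs⟩ := Set.mem_sub.mp habm
    constructor
    · exact ⟨ha, Set.mem_sub.mpr ⟨x, hx, s + b, hσ.2 s hs b hb, by
        rw [sub_add_eq_sub_sub, hxs]; abel⟩⟩
    · exact ⟨hb, Set.mem_sub.mpr ⟨x, hx, s + a, hσ.2 s hs a ha, by
        rw [sub_add_eq_sub_sub, hxs]; abel⟩⟩
  · rintro ⟨⟨ha', ham⟩, ⟨hb', hbm⟩⟩
    obtain ⟨x, hx, s, hs, rfl⟩ := Set.mem_sub.mp ham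
    obtain ⟨y, hy, t, ht, rfl⟩ := Set.mem_sub.mp hbm
    refine ⟨hσ.2 _ ha' _ hb', Set.mem_sub.mpr ⟨x + y, hα.2 x hx y hy, s + t, hσ.2 s hs t ht, by abel⟩⟩

/-- σ - α = σ - mf(α). -/
lemma sub_mf {σ α : Set L} (hσ : IsCone σ) (hαs : α ⊆ σ) :
    σ - α = σ - (σ ∩ (α - σ)) := by
  apply Set.Subset.antisymm
  · intro z hz
    obtain ⟨s, hs, x, hx, rfl⟩ := Set.mem_sub.mp hz
    exact Set.mem_sub.mpr ⟨s, hs, x, ⟨hαs hx, Set.mem_sub.mpr ⟨x, hx, 0, hσ.1, by simp⟩⟩, rfl⟩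
  · intro z hz
    obtain ⟨s, hs, m, ⟨hm1, hm2⟩, rfl⟩ := Set.mem_sub.mp hz
    obtain ⟨x, hx, s', hs', hxs⟩ := Set.mem_sub.mp hm2
    exact Set.mem_sub.mpr ⟨s + s', hσ.2 s hs s' hs', x, hx, by rw [← hxs]; abel⟩

/-- Any face of σ - κ contains κ, and (σ - κ) - τ = σ - (σ ∩ τ). -/
lemma coface_face_sub {σ κ τ : Set L} (hσ : IsCone σ) (hκ : IsCone κ) (hκσ : κ ⊆ σ)
    (hτ : IsFace (σ - κ) τ) : (σ - κ) - τ = σ - (σ ∩ τ) ∧ IsCone (σ ∩ τ) := by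
  have hσ' : IsCone (σ - κ) := sub_cone hσ hκ
  have hσsub : σ ⊆ σ - κ := fun s hs => Set.mem_sub.mpr ⟨s, hs, 0, hκ.1, by simp⟩
  have hτcone : IsCone τ := face_cone hσ' hτ
  obtain ⟨-, hτsub, hface⟩ := hτ
  -- κ ⊆ τ
  have hκτ : κ ⊆ τ := by
    intro k hk
    have hk1 : k ∈ σ - κ := hσsub (hκσ hk)
    have hk2 : -k ∈ σ - κ := Set.mem_sub.mpr ⟨0, hσ.1, k, hk, by simp⟩
    have : k + (-k) ∈ τ := by simpa using hτcone.1
    exact ((hface k hk1 (-k) hk2).mp this).1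
  constructor
  · apply Set.Subset.antisymm
    · intro z hz
      obtain ⟨a, ha, t, ht, rfl⟩ := Set.mem_sub.mp hz
      obtain ⟨s, hs, k, hk, rfl⟩ := Set.mem_sub.mp ha
      have htk : t + k ∈ τ :=
        (hface t (hτsub ht) k (hσsub (hκσ hk))).mpr ⟨ht, hκτ hk⟩
      obtain ⟨s1, hs1, k1, hk1, hsk1⟩ := Set.mem_sub.mp (hτsub htk)
      have hse : (t + k) + k1 = s1 := by rw [← hsk1]; abel
      have hs1τ : s1 ∈ τ := by
        have : (t + k) + k1 ∈ τ :=
          (hface (t + k) (hτsub htk) k1 (hσsub (hκσ hk1))).mpr ⟨htk, hκτ hk1⟩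
        rwa [hse] at this
      exact Set.mem_sub.mpr ⟨s + k1, hσ.2 s hs k1 (hκσ hk1), s1, ⟨hs1, hs1τ⟩,
        by rw [← hse]; abel⟩
    · intro z hz
      obtain ⟨s, hs, m, ⟨hm1, hm2⟩, rfl⟩ := Set.mem_sub.mp hz
      exact Set.mem_sub.mpr ⟨s, hσsub hs, m, hm2, rfl⟩
  · refine ⟨⟨hσ.1, hτcone.1⟩, fun a ha b hb => ⟨hσ.2 a ha.1 b hb.1, hτcone.2 a ha.2 b hb.2⟩⟩

end aux

/-- `(σ − τ) + (σ − τ') = σ − (τ + τ') = σ − mf(τ + τ')` is a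
common coface of `σ − τ` and `σ − τ'`; the set of all cofaces of `σ` is a
cofan. -/
theorem stmt7
    {L : Type*} [AddCommGroup L] [Module.Free ℤ L] [Module.Finite ℤ L]
    (σ : Set L) (hσ : IsCone σ) :
    (∀ τ τ' : Set L, IsFace σ τ → IsFace σ τ' →
      (σ - τ) + (σ - τ') = σ - (τ + τ') ∧
      σ - (τ + τ') = σ - (σ ∩ ((τ + τ') - σ)) ∧
      IsCoface ((σ - τ) + (σ - τ')) (σ - τ) ∧
      IsCoface ((σ - τ) + (σ - τ')) (σ - τ')) ∧
    IsCofan {κ : Set L | IsCoface κ σ} := by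
  
  have hsubself : ∀ κ : Set L, IsCone κ → σ ⊆ σ - κ := fun κ hκ s hs =>
    Set.mem_sub.mpr ⟨s, hs, 0, hκ.1, by simp⟩
  constructor
  · intro τ τ' hτ hτ'
    have hτc := face_cone hσ hτ
    have hτ'c := face_cone hσ hτ'
    have h1 : (σ - τ) + (σ - τ') = σ - (τ + τ') := by
      rw [sub_add_sub_comm, cone_add_self hσ]
    have hττ' : τ + τ' ⊆ σ := by
      intro x hx; obtain ⟨a, ha, b, hb, rfl⟩ := Set.mem_add.mp hx
      exact hσ.2 a (hτ.2.1 ha) b (hτ'.2.1 hb)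
    refine ⟨h1, sub_mf hσ hττ', ?_, ?_⟩
    · exact ⟨τ', hτ'c, fun x hx => hsubself τ hτc (hτ'.2.1 hx), by rw [h1, ← sub_sub]⟩
    · exact ⟨τ, hτc, fun x hx => hsubself τ' hτ'c (hτ.2.1 hx),
        by rw [h1, add_comm τ τ', ← sub_sub]⟩
  · refine ⟨?_, ?_, ?_⟩
    · rintro σ' ⟨κ, hκ, hκσ, rfl⟩
      exact sub_cone hσ hκ
    · rintro σ' ⟨κ, hκ, hκσ, rfl⟩ τ hτ
      obtain ⟨heq, hcone⟩ := coface_face_sub hσ hκ hκσ hτ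
      exact ⟨σ ∩ τ, hcone, Set.inter_subset_left, heq⟩
    · rintro σ' ⟨κ, hκ, hκσ, rfl⟩ σ'' ⟨κ', hκ', hκ'σ, rfl⟩
      have hσ' := sub_cone hσ hκ
      have hκ'σ' : κ' ⊆ σ - κ := fun x hx => hsubself κ hκ (hκ'σ hx)
      refine ⟨(σ - κ) ∩ (κ' - (σ - κ)), mf_isFace hσ' hκ' hκ'σ', ?_⟩
      rw [sub_add_sub_comm, cone_add_self hσ, ← sub_sub, sub_mf hσ' hκ'σ']
end

section
/- Let f : L → L′ be a homomorphism of lattices and 𝒞 a cofan in L. Then f(𝒞) = {f(σ) : σ ∈ 𝒞} is a cofan in L′. Moreover, for any integral cone σ in L, the set of cofaces of the cone f(σ) equals the set of images under f of the cofaces of σ. -/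
open Pointwise

/-!
Every subcone `κ ⊆ σ` can be replaced by the face it generates, `{x ∈ σ | ∃ y ∈ σ, x + y ∈ κ}`,
without changing `σ - κ`. Hence a cofan is the same as a set of cones closed under cofaces in
which `σ + σ'` is always a coface of `σ`, and this reformulation is visibly preserved by images,
because a subcone `κ' ⊆ f(σ)` is the image of the subcone `σ ∩ f⁻¹(κ')` of `σ`.
-/

section Monoid

variable {L L' : Type*} [AddCommMonoid L] [AddCommMonoid L']

lemma IsFace.isCone_s9 {σ τ : Set L} (hσ : IsCone σ) (h : IsFace σ τ) : IsCone τ := by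
  obtain ⟨⟨a, ha⟩, hsub, hiff⟩ := h
  have h0 : (0 : L) ∈ τ := ((hiff a (hsub ha) 0 hσ.1).mp (by rwa [add_zero])).2
  exact ⟨h0, fun x hx y hy => (hiff x (hsub hx) y (hsub hy)).mpr ⟨hx, hy⟩⟩

lemma IsCone.image (f : L →+ L') {σ : Set L} (h : IsCone σ) : IsCone (f '' σ) := by
  refine ⟨⟨0, h.1, f.map_zero⟩, ?_⟩
  rintro _ ⟨a, ha, rfl⟩ _ ⟨b, hb, rfl⟩
  exact ⟨a + b, h.2 a ha b hb, f.map_add a b⟩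

lemma IsCone.inter_preimage (f : L →+ L') {σ : Set L} {κ' : Set L'} (hσ : IsCone σ)
    (hκ' : IsCone κ') : IsCone (σ ∩ f ⁻¹' κ') := by
  refine ⟨⟨hσ.1, by simpa using hκ'.1⟩, ?_⟩
  rintro a ⟨ha, ha'⟩ b ⟨hb, hb'⟩
  exact ⟨hσ.2 a ha b hb, by simpa using hκ'.2 _ ha' _ hb'⟩

def faceHull (σ κ : Set L) : Set L :=
  {x ∈ σ | ∃ y ∈ σ, x + y ∈ κ}

lemma isFace_faceHull {σ κ : Set L} (hσ : IsCone σ) (hκ : IsCone κ) :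
    IsFace σ (faceHull σ κ) := by
  refine ⟨⟨0, hσ.1, 0, hσ.1, by simpa using hκ.1⟩, fun x hx => hx.1, fun a ha b hb => ?_⟩
  constructor
  · rintro ⟨-, y, hy, hk⟩
    refine ⟨⟨ha, b + y, hσ.2 b hb y hy, by rwa [← add_assoc]⟩,
      ⟨hb, a + y, hσ.2 a ha y hy, ?_⟩⟩
    rwa [add_left_comm, ← add_assoc]
  · rintro ⟨⟨-, y, hy, hky⟩, ⟨-, z, hz, hkz⟩⟩
    refine ⟨hσ.2 a ha b hb, y + z, hσ.2 y hy z hz, ?_⟩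
    rw [add_add_add_comm]
    exact hκ.2 _ hky _ hkz

end Monoid

section Group

variable {L L' : Type*} [AddCommGroup L] [AddCommGroup L']

lemma sub_faceHull_eq {σ κ : Set L} (hσ : IsCone σ) (hκσ : κ ⊆ σ) :
    σ - faceHull σ κ = σ - κ := by
  refine Set.Subset.antisymm ?_ (Set.sub_subset_sub le_rfl fun k hk => ⟨hκσ hk, 0, hσ.1, by simpa⟩)
  rintro _ ⟨s, hs, t, ⟨-, y, hy, hty⟩, rfl⟩
  exact ⟨s + y, hσ.2 s hs y hy, t + y, hty, add_sub_add_right_eq_sub s t y⟩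

lemma IsCone.isCoface_iff_exists_isFace {σ' σ : Set L} (hσ : IsCone σ) :
    IsCoface σ' σ ↔ ∃ τ, IsFace σ τ ∧ σ' = σ - τ := by
  constructor
  · rintro ⟨κ, hκ, hκσ, rfl⟩
    exact ⟨faceHull σ κ, isFace_faceHull hσ hκ, (sub_faceHull_eq hσ hκσ).symm⟩
  · rintro ⟨τ, hτ, rfl⟩
    exact ⟨τ, hτ.isCone_s9 hσ, hτ.2.1, rfl⟩

lemma isCofan_iff_isCoface {C : Set (Set L)} :
    IsCofan C ↔ (∀ σ ∈ C, IsCone σ) ∧ (∀ σ ∈ C, ∀ σ', IsCoface σ' σ → σ' ∈ C) ∧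
      ∀ σ ∈ C, ∀ σ' ∈ C, IsCoface (σ + σ') σ := by
  refine and_congr_right fun hcone => and_congr ?_ ?_
  · refine forall₂_congr fun σ hσ => ?_
    simp only [(hcone σ hσ).isCoface_iff_exists_isFace]
    exact ⟨fun h _ ⟨τ, hτ, hσ'⟩ => hσ' ▸ h τ hτ, fun h τ hτ => h _ ⟨τ, hτ, rfl⟩⟩
  · exact forall₂_congr fun σ hσ => forall₂_congr fun σ' _ =>
      ((hcone σ hσ).isCoface_iff_exists_isFace).symm

lemma IsCoface.image (f : L →+ L') {σ' σ : Set L} (h : IsCoface σ' σ) :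
    IsCoface (f '' σ') (f '' σ) := by
  obtain ⟨κ, hκ, hκσ, rfl⟩ := h
  exact ⟨f '' κ, hκ.image f, Set.image_mono hκσ, Set.image_sub f⟩

lemma IsCone.isCoface_image_iff (f : L →+ L') {σ : Set L} (hσ : IsCone σ) {σ'' : Set L'} :
    IsCoface σ'' (f '' σ) ↔ ∃ σ', IsCoface σ' σ ∧ f '' σ' = σ'' := by
  refine ⟨?_, fun ⟨σ', h, hσ'⟩ => hσ' ▸ h.image f⟩
  rintro ⟨κ', hκ', hκ'σ, rfl⟩
  refine ⟨σ - σ ∩ f ⁻¹' κ', ⟨_, hσ.inter_preimage f hκ', Set.inter_subset_left, rfl⟩, ?_⟩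
  rw [Set.image_sub, Set.image_inter_preimage, Set.inter_eq_right.mpr hκ'σ]

lemma IsCofan.image (f : L →+ L') {C : Set (Set L)} (hC : IsCofan C) :
    IsCofan (Set.image (f '' ·) C) := by
  obtain ⟨hcone, hcoface, hsum⟩ := isCofan_iff_isCoface.mp hC
  refine isCofan_iff_isCoface.mpr ⟨?_, ?_, ?_⟩
  · rintro _ ⟨σ, hσ, rfl⟩
    exact (hcone σ hσ).image f
  · rintro _ ⟨σ, hσ, rfl⟩ σ'' h
    obtain ⟨σ', hσ'σ, rfl⟩ := ((hcone σ hσ).isCoface_image_iff f).mp h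
    exact ⟨σ', hcoface σ hσ σ' hσ'σ, rfl⟩
  · rintro _ ⟨σ, hσ, rfl⟩ _ ⟨σ', hσ', rfl⟩
    rw [← Set.image_add f]
    exact (hsum σ hσ σ' hσ').image f

end Group

theorem stmt9_general
    {L L' : Type*} [AddCommGroup L]
    [AddCommGroup L']
    (f : L →+ L') (C : Set (Set L)) (hC : IsCofan C) :
    IsCofan (Set.image (Set.image ⇑f) C) ∧
    ∀ σ : Set L, IsCone σ →
      {κ' : Set L' | IsCoface κ' (⇑f '' σ)} =
        Set.image (Set.image ⇑f) {κ : Set L | IsCoface κ σ} := by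
  refine ⟨hC.image f, fun σ hσ => ?_⟩
  ext σ''
  exact hσ.isCoface_image_iff f

/-- the pushforward of a cofan along a lattice homomorphism is a
cofan, and the cofaces of `f(σ)` are exactly the images of the cofaces of `σ`. -/
theorem stmt9
    {L L' : Type*} [AddCommGroup L] [Module.Free ℤ L] [Module.Finite ℤ L]
    [AddCommGroup L'] [Module.Free ℤ L'] [Module.Finite ℤ L']
    (f : L →+ L') (C : Set (Set L)) (hC : IsCofan C) :
    IsCofan (Set.image (Set.image ⇑f) C) ∧
    ∀ σ : Set L, IsCone σ →
      {κ' : Set L' | IsCoface κ' (⇑f '' σ)} =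
        Set.image (Set.image ⇑f) {κ : Set L | IsCoface κ σ} :=
  stmt9_general f C hC
end

section
/- Let f : L → L′ be a homomorphism of lattices and Δ′ a fan in L′. Then f⁻¹(Δ′) = {f⁻¹(σ′) : σ′ ∈ Δ′} is a fan in L. Moreover, for any integral cone σ in L′, the set of faces of the cone f⁻¹(σ) equals the set of preimages under f of the faces of σ. -/
open Pointwise

/-- A fan: a set of cones closed under taking faces, any two of whose cones
intersect in a common face. -/
def IsFan {M : Type*} [AddCommMonoid M] (Δ : Set (Set M)) : Prop :=
  (∀ σ ∈ Δ, IsCone σ) ∧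
  (∀ σ ∈ Δ, ∀ τ : Set M, IsFace σ τ → τ ∈ Δ) ∧
  (∀ σ ∈ Δ, ∀ σ' ∈ Δ, IsFace σ (σ ∩ σ') ∧ IsFace σ' (σ ∩ σ'))

/-- Any face of a cone contains `0`. -/
lemma zero_mem_face {M : Type*} [AddCommMonoid M] {σ τ : Set M}
    (hσ : IsCone σ) (hτ : IsFace σ τ) : 0 ∈ τ := by
  obtain ⟨⟨a, ha⟩, hsub, hiff⟩ := hτ
  have haσ : a ∈ σ := hsub ha
  have := (hiff a haσ 0 hσ.1).mp (by simpa using ha)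
  exact this.2

/-- Preimage of a cone is a cone. -/
lemma isCone_preimage {L L' : Type*} [AddCommGroup L] [AddCommGroup L']
    (f : L →+ L') {σ : Set L'} (hσ : IsCone σ) : IsCone (⇑f ⁻¹' σ) := by
  refine ⟨by simpa using hσ.1, fun a ha b hb => ?_⟩
  simpa using hσ.2 _ ha _ hb

/-- Preimage of a face is a face of the preimage. -/
lemma isFace_preimage {L L' : Type*} [AddCommGroup L] [AddCommGroup L']
    (f : L →+ L') {σ τ : Set L'} (hσ : IsCone σ) (hτ : IsFace σ τ) :
    IsFace (⇑f ⁻¹' σ) (⇑f ⁻¹' τ) := by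
  obtain ⟨hne, hsub, hiff⟩ := hτ
  refine ⟨⟨0, by simpa using zero_mem_face hσ ⟨hne, hsub, hiff⟩⟩,
    fun x hx => hsub hx, fun a ha b hb => ?_⟩
  simpa using hiff (f a) ha (f b) hb

/-- Every face of `f⁻¹σ` is the preimage of a face of `σ`. -/
lemma face_of_preimage {L L' : Type*} [AddCommGroup L] [AddCommGroup L']
    (f : L →+ L') {σ : Set L'} (hσ : IsCone σ) {τ : Set L}
    (hτ : IsFace (⇑f ⁻¹' σ) τ) : ∃ τ' : Set L', IsFace σ τ' ∧ ⇑f ⁻¹' τ' = τ := by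
  obtain ⟨⟨x₀, hx₀⟩, hsub, hiff⟩ := hτ
  set τ' : Set L' := {y | y ∈ σ ∧ ∃ x ∈ τ, ∃ z ∈ σ, y + z = f x} with hτ'def
  have hmemτ' : ∀ x ∈ τ, f x ∈ τ' := by
    intro x hx
    exact ⟨hsub hx, x, hx, 0, hσ.1, by simp⟩
  refine ⟨τ', ⟨⟨f x₀, hmemτ' x₀ hx₀⟩, fun y hy => hy.1, ?_⟩, ?_⟩
  · intro a ha b hb
    constructor
    · rintro ⟨-, x, hx, z, hz, hxz⟩
      constructor
      · exact ⟨ha, x, hx, b + z, hσ.2 _ hb _ hz, by rw [← hxz]; abel⟩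
      · exact ⟨hb, x, hx, a + z, hσ.2 _ ha _ hz, by rw [← hxz]; abel⟩
    · rintro ⟨⟨-, x₁, hx₁, z₁, hz₁, h₁⟩, ⟨-, x₂, hx₂, z₂, hz₂, h₂⟩⟩
      refine ⟨hσ.2 _ ha _ hb, x₁ + x₂, ?_, z₁ + z₂, hσ.2 _ hz₁ _ hz₂, ?_⟩
      · exact (hiff x₁ (hsub hx₁) x₂ (hsub hx₂)).mpr ⟨hx₁, hx₂⟩
      · rw [map_add, ← h₁, ← h₂]; abel
  · ext x
    constructor
    · rintro ⟨hxσ, x', hx', z, hz, hxz⟩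
      -- f x + z = f x', so z = f (x' - x), and x + (x' - x) = x' ∈ τ
      have hz' : f (x' - x) = z := by
        rw [map_sub, ← hxz]; abel
      have hmem : x' - x ∈ ⇑f ⁻¹' σ := by
        simp only [Set.mem_preimage, hz']; exact hz
      have : x + (x' - x) ∈ τ := by simpa using hx'
      exact ((hiff x hxσ (x' - x) hmem).mp this).1
    · intro hx
      exact hmemτ' x hx

/-- the preimage of a fan along a lattice homomorphism is a fan,
and the faces of `f⁻¹(σ)` are exactly the preimages of the faces of `σ`. -/
theorem stmt10
    {L L' : Type*} [AddCommGroup L] [Module.Free ℤ L] [Module.Finite ℤ L]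
    [AddCommGroup L'] [Module.Free ℤ L'] [Module.Finite ℤ L']
    (f : L →+ L') (Δ' : Set (Set L')) (hΔ' : IsFan Δ') :
    IsFan (Set.image (Set.preimage ⇑f) Δ') ∧
    ∀ σ : Set L', IsCone σ →
      {τ : Set L | IsFace (⇑f ⁻¹' σ) τ} =
        Set.image (Set.preimage ⇑f) {τ : Set L' | IsFace σ τ} := by
  obtain ⟨hcone, hface, hinter⟩ := hΔ'
  have key : ∀ σ : Set L', IsCone σ →
      {τ : Set L | IsFace (⇑f ⁻¹' σ) τ} =
        Set.image (Set.preimage ⇑f) {τ : Set L' | IsFace σ τ} := by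
    intro σ hσ
    ext τ
    constructor
    · intro hτ
      obtain ⟨τ', hτ', hpre⟩ := face_of_preimage f hσ hτ
      exact ⟨τ', hτ', hpre⟩
    · rintro ⟨τ', hτ', rfl⟩
      exact isFace_preimage f hσ hτ'
  refine ⟨⟨?_, ?_, ?_⟩, key⟩
  · rintro σ ⟨σ', hσ', rfl⟩
    exact isCone_preimage f (hcone σ' hσ')
  · rintro σ ⟨σ', hσ', rfl⟩ τ hτ
    obtain ⟨τ', hτ', rfl⟩ := face_of_preimage f (hcone σ' hσ') hτ
    exact ⟨τ', hface σ' hσ' τ' hτ', rfl⟩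
  · rintro σ ⟨σ₁, hσ₁, rfl⟩ σ' ⟨σ₂, hσ₂, rfl⟩
    have h12 := hinter σ₁ hσ₁ σ₂ hσ₂
    have hint : ⇑f ⁻¹' σ₁ ∩ ⇑f ⁻¹' σ₂ = ⇑f ⁻¹' (σ₁ ∩ σ₂) := by
      rw [Set.preimage_inter]
    rw [hint]
    exact ⟨isFace_preimage f (hcone σ₁ hσ₁) h12.1,
      isFace_preimage f (hcone σ₂ hσ₂) h12.2⟩
end

section
/- Let 𝒞 be a cofan in a lattice L with associated fan Δ = {τ : τ is a face of σ∨ for some σ ∈ 𝒞} in the dual lattice L∨ = Hom(L, ℤ). Then for every τ ∈ Δ, the set {σ ∈ 𝒞 : τ is a face of σ∨} is nonempty and has a least element u(τ) with respect to the coface partial order (σ′ ≤ σ iff σ′ is a coface of σ); the resulting map u satisfies the adjunction: for all τ ∈ Δ and σ ∈ 𝒞, u(τ) is a coface of σ if and only if τ is a face of σ∨. Moreover, if τ is a face of σ∨ for some σ ∈ 𝒞, then u(τ) = σ − (σ ∩ τ⊥), where τ⊥ = {a ∈ L : v(a) = 0 for all v ∈ τ}. -/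
open Pointwise

/-- The dual cone of `σ ⊆ L` in the dual lattice `L∨ = Hom(L, ℤ)`. -/
def dualCone {L : Type*} [AddCommGroup L] (σ : Set L) : Set (L →+ ℤ) :=
  {v | ∀ a ∈ σ, 0 ≤ v a}

section Aux

variable {L : Type*} [AddCommGroup L]

lemma face_zero_mem {σ ρ : Set L} (hσ0 : 0 ∈ σ) (h : IsFace σ ρ) : 0 ∈ ρ := by
  obtain ⟨⟨r, hr⟩, hsub, hiff⟩ := h
  exact ((hiff r (hsub hr) 0 hσ0).mp (by simpa using hr)).2

lemma face_restrict {M : Type*} [AddCommMonoid M] {S T τ : Set M}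
    (h : IsFace S τ) (hτT : τ ⊆ T) (hTS : T ⊆ S) : IsFace T τ :=
  ⟨h.1, hτT, fun a ha b hb => h.2.2 a (hTS ha) b (hTS hb)⟩

/-- key set identity: localising at a face `ρ ⊆ τ⊥` does not change `σ - (σ ∩ τ⊥)`. -/
lemma lemmaE {σ ρ : Set L} {τ : Set (L →+ ℤ)}
    (hσadd : ∀ a ∈ σ, ∀ b ∈ σ, a + b ∈ σ)
    (hρ0 : (0 : L) ∈ ρ) (hρσ : ρ ⊆ σ)
    (hρτ : ∀ r ∈ ρ, ∀ v ∈ τ, v r = 0) :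
    σ - (σ ∩ {a : L | ∀ v ∈ τ, v a = 0})
      = (σ - ρ) - ((σ - ρ) ∩ {a : L | ∀ v ∈ τ, v a = 0}) := by
  ext x
  constructor
  · rintro hx
    rw [Set.mem_sub] at hx
    obtain ⟨s, hs, k, hk, rfl⟩ := hx
    obtain ⟨hkσ, hkP⟩ := hk
    rw [Set.mem_sub]
    refine ⟨s, ?_, k, ⟨?_, hkP⟩, rfl⟩
    · rw [Set.mem_sub]; exact ⟨s, hs, 0, hρ0, sub_zero s⟩
    · rw [Set.mem_sub]; exact ⟨k, hkσ, 0, hρ0, sub_zero k⟩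
  · rintro hx
    rw [Set.mem_sub] at hx
    obtain ⟨y, hy, z, hz, rfl⟩ := hx
    rw [Set.mem_sub] at hy
    obtain ⟨s, hs, r, hr, rfl⟩ := hy
    obtain ⟨hzσ, hzP⟩ := hz
    rw [Set.mem_sub] at hzσ
    obtain ⟨s', hs', r', hr', rfl⟩ := hzσ
    have hs'P : ∀ v ∈ τ, v s' = 0 := by
      intro v hv
      have h1 : v (s' - r') = 0 := hzP v hv
      have h2 : v r' = 0 := hρτ r' hr' v hv
      have := map_sub v s' r'
      omega
    rw [Set.mem_sub]
    refine ⟨s + r', hσadd s hs r' (hρσ hr'), r + s',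
      ⟨hσadd r (hρσ hr) s' hs', ?_⟩, by abel⟩
    intro v hv
    have h2 : v r = 0 := hρτ r hr v hv
    have h3 : v s' = 0 := hs'P v hv
    rw [map_add, h2, h3]; ring

/-- `σ ∩ τ⊥` is a face of `σ` whenever `τ ⊆ σ∨`. -/
lemma inter_perp_face {σ : Set L} (hσ : IsCone σ) {τ : Set (L →+ ℤ)}
    (hτ : τ ⊆ dualCone σ) :
    IsFace σ (σ ∩ {a : L | ∀ v ∈ τ, v a = 0}) := by
  refine ⟨⟨0, hσ.1, fun v _ => map_zero v⟩, Set.inter_subset_left, ?_⟩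
  intro a ha b hb
  constructor
  · rintro ⟨-, hab⟩
    refine ⟨⟨ha, fun v hv => ?_⟩, ⟨hb, fun v hv => ?_⟩⟩ <;>
    · have h1 := hab v hv
      have h2 := hτ hv a ha
      have h3 := hτ hv b hb
      have h4 := map_add v a b
      omega
  · rintro ⟨⟨-, hav⟩, ⟨-, hbv⟩⟩
    exact ⟨hσ.2 a ha b hb, fun v hv => by rw [map_add, hav v hv, hbv v hv]; ring⟩

/-- values of `τ ⊆ (σ - ρ)∨` vanish on `ρ` whenever `ρ ⊆ σ` ... here direct form. -/
lemma mainLemma {C : Set (Set L)} (hC : IsCofan C) {σ σ' : Set L}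
    (hσ : σ ∈ C) (hσ' : σ' ∈ C) {τ : Set (L →+ ℤ)}
    (h1 : IsFace (dualCone σ) τ) (h2 : IsFace (dualCone σ') τ) :
    σ - (σ ∩ {a : L | ∀ v ∈ τ, v a = 0})
      = σ' - (σ' ∩ {a : L | ∀ v ∈ τ, v a = 0}) := by
  obtain ⟨ρ, hρface, heq⟩ := hC.2.2 σ hσ σ' hσ'
  obtain ⟨ρ', hρ'face, heq'⟩ := hC.2.2 σ' hσ' σ hσ
  have hcσ := hC.1 σ hσ
  have hcσ' := hC.1 σ' hσ'
  -- values of τ vanish on ρ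
  have key : ∀ (δ δ' ρ₀ : Set L), IsCone δ → IsCone δ' → IsFace δ ρ₀ →
      δ + δ' = δ - ρ₀ → τ ⊆ dualCone δ → τ ⊆ dualCone δ' →
      ∀ r ∈ ρ₀, ∀ v ∈ τ, v r = 0 := by
    intro δ δ' ρ₀ hδ hδ' hρ₀ he hτδ hτδ' r hr v hv
    have h3 : (0 : ℤ) ≤ v r := hτδ hv r (hρ₀.2.1 hr)
    have h4 : (0 : L) - r ∈ δ - ρ₀ := by
      rw [Set.mem_sub]; exact ⟨0, hδ.1, r, hr, rfl⟩
    rw [← he, Set.mem_add] at h4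
    obtain ⟨s, hs, s', hs', hss'⟩ := h4
    have h5 : (0 : ℤ) ≤ v s := hτδ hv s hs
    have h6 : (0 : ℤ) ≤ v s' := hτδ' hv s' hs'
    have h7 : v (s + s') = v (0 - r) := by rw [hss']
    rw [map_add, map_sub, map_zero] at h7
    omega
  have hρτ := key σ σ' ρ hcσ hcσ' hρface heq h1.2.1 h2.2.1
  have hρ'τ := key σ' σ ρ' hcσ' hcσ hρ'face heq' h2.2.1 h1.2.1
  rw [lemmaE hcσ.2 (face_zero_mem hcσ.1 hρface) hρface.2.1 hρτ,
      lemmaE hcσ'.2 (face_zero_mem hcσ'.1 hρ'face) hρ'face.2.1 hρ'τ,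
      ← heq, ← heq', add_comm σ σ']

/-- adjunction, forward direction, abstract form. -/
lemma adj_forward {σ' κ' : Set L} (hσ' : IsCone σ') (hκ'0 : (0:L) ∈ κ')
    (hκ'σ' : κ' ⊆ σ') {τ : Set (L →+ ℤ)}
    (hface : IsFace (dualCone (σ' - κ')) τ) : IsFace (dualCone σ') τ := by
  have hDsub : dualCone (σ' - κ') ⊆ dualCone σ' := by
    intro v hv s hs
    have : s - 0 ∈ σ' - κ' := by rw [Set.mem_sub]; exact ⟨s, hs, 0, hκ'0, rfl⟩
    have := hv _ this
    rwa [map_sub, map_zero, sub_zero] at this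
  have hτκ' : ∀ v ∈ τ, ∀ k ∈ κ', v k = 0 := by
    intro v hv k hk
    have h1 : (0:ℤ) ≤ v k := hDsub (hface.2.1 hv) k (hκ'σ' hk)
    have h2 : (0:L) - k ∈ σ' - κ' := by
      rw [Set.mem_sub]; exact ⟨0, hσ'.1, k, hk, rfl⟩
    have h3 := hface.2.1 hv _ h2
    rw [map_sub, map_zero] at h3
    omega
  refine ⟨hface.1, fun v hv => hDsub (hface.2.1 hv), ?_⟩
  intro u hu w hw
  constructor
  · intro huw
    have hvanish : ∀ k ∈ κ', u k = 0 ∧ w k = 0 := by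
      intro k hk
      have h1 : (0:ℤ) ≤ u k := hu k (hκ'σ' hk)
      have h2 : (0:ℤ) ≤ w k := hw k (hκ'σ' hk)
      have h3 : (u + w) k = 0 := hτκ' _ huw k hk
      rw [AddMonoidHom.add_apply] at h3
      omega
    have hu' : u ∈ dualCone (σ' - κ') := by
      intro x hx
      rw [Set.mem_sub] at hx
      obtain ⟨s, hs, k, hk, rfl⟩ := hx
      rw [map_sub, (hvanish k hk).1, sub_zero]
      exact hu s hs
    have hw' : w ∈ dualCone (σ' - κ') := by
      intro x hx
      rw [Set.mem_sub] at hx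
      obtain ⟨s, hs, k, hk, rfl⟩ := hx
      rw [map_sub, (hvanish k hk).2, sub_zero]
      exact hw s hs
    exact (hface.2.2 u hu' w hw').mp huw
  · rintro ⟨hu', hw'⟩
    exact (hface.2.2 u (hface.2.1 hu') w (hface.2.1 hw')).mpr ⟨hu', hw'⟩

end Aux

lemma dual_sub_subset' {L : Type*} [AddCommGroup L] {σ κ : Set L} (hκ0 : (0:L) ∈ κ) :
    dualCone (σ - κ) ⊆ dualCone σ := by
  intro v hv s hs
  have h : s - 0 ∈ σ - κ := by rw [Set.mem_sub]; exact ⟨s, hs, 0, hκ0, rfl⟩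
  have := hv _ h
  rwa [map_sub, map_zero, sub_zero] at this

lemma perp_cone {L : Type*} [AddCommGroup L] {σ : Set L} (hσ : IsCone σ)
    (τ : Set (L →+ ℤ)) : IsCone (σ ∩ {a : L | ∀ v ∈ τ, v a = 0}) := by
  refine ⟨⟨hσ.1, fun v _ => map_zero v⟩, ?_⟩
  rintro a ⟨ha, hav⟩ b ⟨hb, hbv⟩
  exact ⟨hσ.2 a ha b hb, fun v hv => by rw [map_add, hav v hv, hbv v hv]; ring⟩

/-- the lowest coface map, left adjoint to dualisation.  For
every cone `τ` of the fan associated to a cofan `C`, the set of `σ ∈ C` with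
`τ` a face of `σ∨` has a least element `σ₀` for the coface order, the
adjunction `σ₀ ⪯ σ ↔ τ ⪯ σ∨` holds, and `σ₀ = σ − (σ ∩ τ⊥)` whenever `τ` is a
face of `σ∨`. -/
theorem stmt11
    {L : Type*} [AddCommGroup L] [Module.Free ℤ L] [Module.Finite ℤ L]
    (C : Set (Set L)) (hC : IsCofan C)
    (Δ : Set (Set (L →+ ℤ)))
    (hΔ : Δ = {τ : Set (L →+ ℤ) | ∃ σ ∈ C, IsFace (dualCone σ) τ}) :
    ∀ τ ∈ Δ, ∃ σ₀ ∈ C,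
      IsFace (dualCone σ₀) τ ∧
      (∀ σ ∈ C, (IsCoface σ₀ σ ↔ IsFace (dualCone σ) τ)) ∧
      (∀ σ ∈ C, IsFace (dualCone σ) τ →
        σ₀ = σ - (σ ∩ {a : L | ∀ v ∈ τ, v a = 0})) := by
  intro τ hτ
  rw [hΔ] at hτ
  obtain ⟨σ, hσC, hface⟩ := hτ
  have hcσ := hC.1 σ hσC
  have hκface := inter_perp_face hcσ hface.2.1
  have hκ0 : (0:L) ∈ σ ∩ {a : L | ∀ v ∈ τ, v a = 0} := ⟨hcσ.1, fun v _ => map_zero v⟩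
  have hDface : IsFace (dualCone (σ - (σ ∩ {a : L | ∀ v ∈ τ, v a = 0}))) τ := by
    refine face_restrict hface ?_ (dual_sub_subset' hκ0)
    intro v hv x hx
    rw [Set.mem_sub] at hx
    obtain ⟨s, hs, k, ⟨hkσ, hkP⟩, rfl⟩ := hx
    rw [map_sub, hkP v hv, sub_zero]
    exact hface.2.1 hv s hs
  refine ⟨σ - (σ ∩ {a : L | ∀ v ∈ τ, v a = 0}),
    hC.2.1 σ hσC _ hκface, hDface, ?_, ?_⟩
  · intro σ' hσ'C
    constructor
    · rintro ⟨κ', hκ'cone, hκ'sub, heq⟩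
      rw [heq] at hDface
      exact adj_forward (hC.1 σ' hσ'C) hκ'cone.1 hκ'sub hDface
    · intro h'
      exact ⟨σ' ∩ {a : L | ∀ v ∈ τ, v a = 0}, perp_cone (hC.1 σ' hσ'C) τ,
        Set.inter_subset_left, mainLemma hC hσC hσ'C hface h'⟩
  · intro σ' hσ'C h'
    exact mainLemma hC hσC hσ'C hface h'
end

section
/- Let σ be an integral cone in a lattice L and κ ⊆ σ a subcone. Then there exists k ∈ κ such that (σ − κ)∨ = σ∨ ∩ {v ∈ L∨ : v(k) = 0}, where M∨ = {v ∈ Hom(L, ℤ) : v(a) ≥ 0 for all a ∈ M}. In particular, the dual cone (σ − κ)∨ is an exposed face of σ∨. -/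
open Pointwise

/-- Any set in a Noetherian module has a finite subset with the same span. -/
lemma exists_finset_subset_span_eq {L : Type*} [AddCommGroup L] [Module.Finite ℤ L]
    (κ : Set L) : ∃ t : Finset L, ↑t ⊆ κ ∧ Submodule.span ℤ (t : Set L) = Submodule.span ℤ κ := by
  classical
  have hfg : (Submodule.span ℤ κ).FG := IsNoetherian.noetherian _
  obtain ⟨S, hS⟩ := hfg
  have key : ∀ s : {x // x ∈ S}, ∃ t : Finset L, ↑t ⊆ κ ∧
      (s : L) ∈ Submodule.span ℤ (t : Set L) := by
    rintro ⟨s, hs⟩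
    have : s ∈ Submodule.span ℤ κ := hS ▸ Submodule.subset_span hs
    exact Submodule.mem_span_finite_of_mem_span this
  choose f hf1 hf2 using key
  refine ⟨S.attach.biUnion f, ?_, le_antisymm ?_ ?_⟩
  · intro x hx
    obtain ⟨s, _, hxs⟩ := Finset.mem_biUnion.mp hx
    exact hf1 s hxs
  · refine Submodule.span_le.mpr fun x hx => ?_
    obtain ⟨s, _, hxs⟩ := Finset.mem_biUnion.mp hx
    exact Submodule.subset_span (hf1 s hxs)
  · rw [← hS]
    refine Submodule.span_le.mpr fun s hs => ?_
    refine Submodule.span_mono ?_ (hf2 ⟨s, hs⟩)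
    intro x hx
    exact Finset.mem_coe.mpr (Finset.mem_biUnion.mpr ⟨⟨s, hs⟩, Finset.mem_attach _ _, hx⟩)

/-- the dual cone of a coface `σ − κ` is the exposed face
`σ∨ ∩ k⊥` of `σ∨` for some `k ∈ κ`. -/
theorem stmt12
    {L : Type*} [AddCommGroup L] [Module.Free ℤ L] [Module.Finite ℤ L]
    (σ κ : Set L) (hσ : IsCone σ) (hκ : IsCone κ) (hκσ : κ ⊆ σ) :
    ∃ k ∈ κ, dualCone (σ - κ) = dualCone σ ∩ {v : L →+ ℤ | v k = 0} := by
  classical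
  obtain ⟨t, htκ, htspan⟩ := exists_finset_subset_span_eq κ
  -- κ is an AddSubmonoid
  let M : AddSubmonoid L :=
    { carrier := κ
      zero_mem' := hκ.1
      add_mem' := fun {a b} ha hb => hκ.2 a ha b hb }
  set k : L := ∑ s ∈ t, s with hk
  have hkκ : k ∈ κ := AddSubmonoid.sum_mem M (fun s hs => htκ hs)
  refine ⟨k, hkκ, ?_⟩
  ext v
  constructor
  · rintro hv
    have hσv : v ∈ dualCone σ := by
      intro a ha
      have : a - 0 ∈ σ - κ := Set.sub_mem_sub ha hκ.1
      simpa using hv _ this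
    refine ⟨hσv, ?_⟩
    have h1 : 0 ≤ v (0 - k) := hv _ (Set.sub_mem_sub hσ.1 hkκ)
    have h2 : 0 ≤ v k := hσv k (hκσ hkκ)
    simp only [zero_sub, map_neg] at h1
    exact le_antisymm (by omega) h2
  · rintro ⟨hσv, hvk⟩
    -- v vanishes on each element of t
    have hsum : ∑ s ∈ t, v s = 0 := by rw [← map_sum]; exact hvk
    have hvt : ∀ s ∈ t, v s = 0 := by
      intro s hs
      exact (Finset.sum_eq_zero_iff_of_nonneg
        (fun s hs => hσv s (hκσ (htκ hs)))).mp hsum s hs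
    -- hence v vanishes on span t = span κ ⊇ κ
    have hker : ∀ b ∈ κ, v b = 0 := by
      intro b hb
      have hble : Submodule.span ℤ (t : Set L) ≤ LinearMap.ker v.toIntLinearMap :=
        Submodule.span_le.mpr fun s hs => hvt s hs
      have : b ∈ Submodule.span ℤ (t : Set L) := htspan ▸ Submodule.subset_span hb
      exact hble this
    intro x hx
    obtain ⟨a, ha, b, hb, rfl⟩ := hx
    rw [map_sub, hker b hb, sub_zero]
    exact hσv a ha
end

section
/- Let 𝒜 be an abelian category, L a lattice, λ an additive function on 𝒜 with values in L, and E ⊆ L the additive submonoid generated by {λ(X) : X an object of 𝒜}. Then for every face τ of E: (1) the full subcategory S_τ = {X : λ(X) ∈ τ} is a Serre subcategory of 𝒜, i.e. closed under subobjects, quotient objects, and extensions; (2) the additive submonoid of L generated by {λ(X) : X ∈ S_τ} equals τ. In particular, distinct faces of E give distinct face subcategories. -/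
/-!
A face of a monoid is itself a submonoid, and it absorbs both summands of any sum that lands in
it. Since `λ(B) = λ(A) + λ(C)` for every short exact sequence, the values of subobjects and
quotients of `B` are summands of `λ(B)`, which gives the Serre property. Writing an element of the
face as a sum of generators `λ(X)`, each generator is again in the face, so the face is generated
by the values it contains.
-/

open CategoryTheory

namespace IsFace

variable {L : Type*} [AddCommMonoid L] {σ τ : Set L} {a b : L}

theorem add_mem (h : IsFace σ τ) (ha : a ∈ τ) (hb : b ∈ τ) : a + b ∈ τ :=
  (h.2.2 a (h.2.1 ha) b (h.2.1 hb)).2 ⟨ha, hb⟩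

theorem left_mem_of_add_mem (h : IsFace σ τ) (ha : a ∈ σ) (hb : b ∈ σ) (hab : a + b ∈ τ) :
    a ∈ τ :=
  ((h.2.2 a ha b hb).1 hab).1

theorem right_mem_of_add_mem (h : IsFace σ τ) (ha : a ∈ σ) (hb : b ∈ σ) (hab : a + b ∈ τ) :
    b ∈ τ :=
  ((h.2.2 a ha b hb).1 hab).2

theorem zero_mem {M : AddSubmonoid L} (h : IsFace (M : Set L) τ) : (0 : L) ∈ τ := by
  obtain ⟨t, ht⟩ := h.1
  exact h.right_mem_of_add_mem (h.2.1 ht) M.zero_mem (by rwa [add_zero])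

def toAddSubmonoid {M : AddSubmonoid L} (h : IsFace (M : Set L) τ) : AddSubmonoid L where
  carrier := τ
  add_mem' := h.add_mem
  zero_mem' := h.zero_mem

theorem closure_inter_eq {s : Set L} (h : IsFace (AddSubmonoid.closure s : Set L) τ) :
    (AddSubmonoid.closure (s ∩ τ) : Set L) = τ := by
  refine subset_antisymm (AddSubmonoid.closure_le (S := h.toAddSubmonoid) |>.2 fun _ hx => hx.2)
    fun x hx => ?_
  induction h.2.1 hx using AddSubmonoid.closure_induction with
  | mem y hy => exact AddSubmonoid.subset_closure ⟨hy, hx⟩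
  | zero => exact AddSubmonoid.zero_mem _
  | add a b ha hb iha ihb =>
    exact AddSubmonoid.add_mem _ (iha (h.left_mem_of_add_mem ha hb hx))
      (ihb (h.right_mem_of_add_mem ha hb hx))

theorem closure_image_preimage_eq {α : Type*} {f : α → L}
    (h : IsFace (AddSubmonoid.closure (Set.range f) : Set L) τ) :
    (AddSubmonoid.closure (f '' (f ⁻¹' τ)) : Set L) = τ := by
  rw [Set.image_preimage_eq_range_inter, h.closure_inter_eq]

end IsFace

section AdditiveFunction

variable {A : Type*} [Category A] [Abelian A] {L : Type*} [AddCommMonoid L] {lam : A → L}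
  (hadd : ∀ S : ShortComplex A, S.ShortExact → lam S.X₂ = lam S.X₁ + lam S.X₃)
include hadd

theorem exists_add_eq_of_mono
    {X Y : A} (f : X ⟶ Y) [Mono f] : ∃ Z : A, lam Y = lam X + lam Z :=
  ⟨_, hadd (ShortComplex.mk f (Limits.cokernel.π f) (Limits.cokernel.condition f))
    (.mk' (ShortComplex.exact_of_g_is_cokernel _ (Limits.cokernelIsCokernel f))
      inferInstance inferInstance)⟩

theorem exists_add_eq_of_epi
    {X Y : A} (f : X ⟶ Y) [Epi f] : ∃ Z : A, lam X = lam Z + lam Y :=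
  ⟨_, hadd (ShortComplex.mk (Limits.kernel.ι f) f (Limits.kernel.condition f))
    (.mk' (ShortComplex.exact_of_f_is_kernel _ (Limits.kernelIsKernel f))
      inferInstance inferInstance)⟩

variable {τ : Set L} (hτ : IsFace (AddSubmonoid.closure (Set.range lam) : Set L) τ)
include hτ

theorem IsFace.mem_of_mono
    {X Y : A} (f : X ⟶ Y) [Mono f] (hY : lam Y ∈ τ) : lam X ∈ τ := by
  obtain ⟨Z, hZ⟩ := exists_add_eq_of_mono hadd f
  exact hτ.left_mem_of_add_mem (AddSubmonoid.subset_closure ⟨X, rfl⟩)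
    (AddSubmonoid.subset_closure ⟨Z, rfl⟩) (hZ ▸ hY)

theorem IsFace.mem_of_epi
    {X Y : A} (f : X ⟶ Y) [Epi f] (hX : lam X ∈ τ) : lam Y ∈ τ := by
  obtain ⟨Z, hZ⟩ := exists_add_eq_of_epi hadd f
  exact hτ.right_mem_of_add_mem (AddSubmonoid.subset_closure ⟨Z, rfl⟩)
    (AddSubmonoid.subset_closure ⟨Y, rfl⟩) (hZ ▸ hX)

end AdditiveFunction

theorem stmt18_general
    {A : Type*} [Category A] [Abelian A]
    {L : Type*} [AddCommGroup L]
    (lam : A → L)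
    (hadd : ∀ S : ShortComplex A, S.ShortExact → lam S.X₂ = lam S.X₁ + lam S.X₃)
    (E : Set L) (hE : E = (AddSubmonoid.closure (Set.range lam) : Set L)) :
    (∀ τ : Set L, IsFace E τ →
      -- (1) S_τ is a Serre subcategory: closed under subobjects,
      -- quotient objects and extensions
      (∀ (X Y : A) (f : X ⟶ Y), Mono f → lam Y ∈ τ → lam X ∈ τ) ∧
      (∀ (X Y : A) (f : X ⟶ Y), Epi f → lam X ∈ τ → lam Y ∈ τ) ∧
      (∀ S : ShortComplex A, S.ShortExact → lam S.X₁ ∈ τ → lam S.X₃ ∈ τ →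
        lam S.X₂ ∈ τ) ∧
      -- (2) the effective cone of S_τ is τ
      (AddSubmonoid.closure (lam '' {X : A | lam X ∈ τ}) : Set L) = τ) ∧
    -- distinct faces give distinct face subcategories
    (∀ τ τ' : Set L, IsFace E τ → IsFace E τ' →
      {X : A | lam X ∈ τ} = {X : A | lam X ∈ τ'} → τ = τ') := by
  subst hE
  refine ⟨fun τ hτ => ⟨fun _ _ f _ => hτ.mem_of_mono hadd f, fun _ _ f _ => hτ.mem_of_epi hadd f,
    fun S hS h₁ h₃ => hadd S hS ▸ hτ.add_mem h₁ h₃, hτ.closure_image_preimage_eq⟩, ?_⟩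
  intro τ τ' hτ hτ' hS
  change lam ⁻¹' τ = lam ⁻¹' τ' at hS
  rw [← hτ.closure_image_preimage_eq, ← hτ'.closure_image_preimage_eq, hS]

/-- for every face `τ` of the effective cone `E`, the face
subcategory `S_τ = {X : λ(X) ∈ τ}` is a Serre subcategory whose effective
cone is `τ`; distinct faces give distinct face subcategories. -/
theorem stmt18
    {A : Type*} [Category A] [Abelian A]
    {L : Type*} [AddCommGroup L] [Module.Free ℤ L] [Module.Finite ℤ L]
    (lam : A → L)
    (hadd : ∀ S : ShortComplex A, S.ShortExact → lam S.X₂ = lam S.X₁ + lam S.X₃)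
    (E : Set L) (hE : E = (AddSubmonoid.closure (Set.range lam) : Set L)) :
    (∀ τ : Set L, IsFace E τ →
      -- (1) S_τ is a Serre subcategory: closed under subobjects,
      -- quotient objects and extensions
      (∀ (X Y : A) (f : X ⟶ Y), Mono f → lam Y ∈ τ → lam X ∈ τ) ∧
      (∀ (X Y : A) (f : X ⟶ Y), Epi f → lam X ∈ τ → lam Y ∈ τ) ∧
      (∀ S : ShortComplex A, S.ShortExact → lam S.X₁ ∈ τ → lam S.X₃ ∈ τ →
        lam S.X₂ ∈ τ) ∧
      -- (2) the effective cone of S_τ is τ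
      (AddSubmonoid.closure (lam '' {X : A | lam X ∈ τ}) : Set L) = τ) ∧
    -- distinct faces give distinct face subcategories
    (∀ τ τ' : Set L, IsFace E τ → IsFace E τ' →
      {X : A | lam X ∈ τ} = {X : A | lam X ∈ τ'} → τ = τ') :=
  stmt18_general lam hadd E hE
end

section
/- Let σ be an integral cone in a lattice L and suppose the real dual cone C = {v : L →+ ℝ additive homomorphism | v(a) ≥ 0 for all a ∈ σ} spans the whole real vector space of additive homomorphisms L → ℝ (i.e. C is full-dimensional). Then for every a ∈ L, the set σ ∩ (a − σ) = {b ∈ σ : a − b ∈ σ} is finite. In particular, each element of σ has only finitely many decompositions a = b + c with b, c ∈ σ up to the order of summands. -/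
/-!
For `b ∈ σ ∩ (a - σ)` and `v` in the dual cone, `0 ≤ v b ≤ v b + v (a - b) = v a`, so every
element of the dual cone is bounded on `σ ∩ (a - σ)`. Functionals bounded on a fixed set form a
real subspace; as the dual cone spans everything, every functional is bounded there, in
particular every coordinate functional of a `ℤ`-basis of `L`. Hence `σ ∩ (a - σ)` lies in a
finite box of lattice points.
-/

section

variable {L : Type*} [AddCommGroup L]

def boundedFunctionalsOn (S : Set L) : Submodule ℝ (L →+ ℝ) where
  carrier := {f | ∃ M, ∀ b ∈ S, |f b| ≤ M}
  zero_mem' := ⟨0, fun b _ => by simp⟩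
  add_mem' := by
    rintro f g ⟨M, hM⟩ ⟨N, hN⟩
    exact ⟨M + N, fun b hb => (abs_add_le _ _).trans (add_le_add (hM b hb) (hN b hb))⟩
  smul_mem' := by
    rintro c f ⟨M, hM⟩
    refine ⟨|c| * M, fun b hb => ?_⟩
    rw [AddMonoidHom.smul_apply, smul_eq_mul, abs_mul]
    exact mul_le_mul_of_nonneg_left (hM b hb) (abs_nonneg c)

theorem abs_apply_le_of_mem_inter_sub {σ : Set L} {v : L →+ ℝ} (hv : ∀ x ∈ σ, 0 ≤ v x)
    {a b : L} (hb : b ∈ σ) (hab : a - b ∈ σ) : |v b| ≤ v a := by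
  have hvab := hv _ hab
  rw [map_sub] at hvab
  rw [abs_of_nonneg (hv b hb)]
  linarith

theorem span_dualCone_le_boundedFunctionalsOn (σ : Set L) (a : L) :
    Submodule.span ℝ {v : L →+ ℝ | ∀ x ∈ σ, 0 ≤ v x} ≤
      boundedFunctionalsOn {b ∈ σ | a - b ∈ σ} :=
  Submodule.span_le.mpr fun v hv =>
    ⟨v a, fun _ hb => abs_apply_le_of_mem_inter_sub hv hb.1 hb.2⟩

theorem Int.finite_setOf_abs_cast_le (M : ℝ) : {n : ℤ | |(n : ℝ)| ≤ M}.Finite := by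
  refine (Set.finite_Icc (-⌈M⌉) ⌈M⌉).subset fun n hn => ?_
  rw [Set.mem_Icc, ← abs_le]
  have hn : ((|n| : ℤ) : ℝ) ≤ M := by rwa [Int.cast_abs]
  exact_mod_cast hn.trans (Int.le_ceil M)

theorem Set.Finite.of_boundedFunctionalsOn_eq_top [Module.Free ℤ L] [Module.Finite ℤ L]
    {S : Set L} (h : boundedFunctionalsOn S = ⊤) : S.Finite := by
  let B := Module.Free.chooseBasis ℤ L
  have hcoord : ∀ j, ∃ M : ℝ, ∀ b ∈ S, |(B.equivFun b j : ℝ)| ≤ M := fun j =>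
    (h ▸ Submodule.mem_top : (Int.castAddHom ℝ).comp (B.coord j).toAddMonoidHom ∈ _)
  choose M hM using hcoord
  have hbox : (Set.univ.pi fun j => {n : ℤ | |(n : ℝ)| ≤ M j}).Finite :=
    Set.Finite.pi fun j => Int.finite_setOf_abs_cast_le (M j)
  exact (hbox.preimage B.equivFun.injective.injOn).subset fun b hb j _ => hM j b hb

theorem setOf_add_eq_eq_image (σ : Set L) (a : L) :
    {p : L × L | p.1 ∈ σ ∧ p.2 ∈ σ ∧ p.1 + p.2 = a} =
      (fun b => (b, a - b)) '' {b ∈ σ | a - b ∈ σ} := by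
  ext ⟨x, y⟩
  constructor
  · rintro ⟨hx, hy, rfl⟩
    exact ⟨x, ⟨hx, by simpa using hy⟩, by simp⟩
  · rintro ⟨b, ⟨hb, hab⟩, hxy⟩
    simp only [Prod.mk.injEq] at hxy
    obtain ⟨rfl, rfl⟩ := hxy
    exact ⟨hb, hab, add_sub_cancel b a⟩

end

theorem stmt19_general
    {L : Type*} [AddCommGroup L] [Module.Free ℤ L] [Module.Finite ℤ L]
    (σ : Set L)
    (hfull : Submodule.span ℝ {v : L →+ ℝ | ∀ a ∈ σ, 0 ≤ v a} = ⊤) :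
    ∀ a : L,
      {b ∈ σ | a - b ∈ σ}.Finite ∧
      {p : L × L | p.1 ∈ σ ∧ p.2 ∈ σ ∧ p.1 + p.2 = a}.Finite := by
  intro a
  have hfin : {b ∈ σ | a - b ∈ σ}.Finite :=
    .of_boundedFunctionalsOn_eq_top <| top_le_iff.mp <|
      hfull ▸ span_dualCone_le_boundedFunctionalsOn σ a
  exact ⟨hfin, setOf_add_eq_eq_image σ a ▸ hfin.image _⟩

/-- if the real dual cone of an integral cone `σ` spans the
whole space of additive homomorphisms `L → ℝ`, then for every `a ∈ L` the set
`σ ∩ (a − σ)` is finite; in particular every element has only finitely many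
decompositions as a sum of two elements of `σ`. -/
theorem stmt19
    {L : Type*} [AddCommGroup L] [Module.Free ℤ L] [Module.Finite ℤ L]
    (σ : Set L) (hσ : IsCone σ)
    (hfull : Submodule.span ℝ {v : L →+ ℝ | ∀ a ∈ σ, 0 ≤ v a} = ⊤) :
    ∀ a : L,
      {b ∈ σ | a - b ∈ σ}.Finite ∧
      {p : L × L | p.1 ∈ σ ∧ p.2 ∈ σ ∧ p.1 + p.2 = a}.Finite :=
  stmt19_general σ hfull
end
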